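/- arXiv:0811.2586 — 2 statements merged into one kernel-verified Lean document; each statement's English description precedes it below -/
import Mathlib

section
/- For every integer m ≥ 1, the least common multiple of the integers 1, 2, …, m is at least 2^(m−1). (This exponential lower bound on lcm(1, …, m) is what makes the paper's verification of relations between integers of size 2^{poly(n)} possible by computations modulo 1, 2, …, m with m = poly(n).) -/
/-!
If `0 < k ≤ n`, then `k * choose n k` divides `lcm(1, …, n)`: by Kummer, the `p`-adic valuation of
`choose n k` counts the carries when adding `k` and `n - k` in base `p`, and no carry occurs in the
lowest `v_p(k)` digits, so `v_p(k) + v_p(choose n k) ≤ log_p n = v_p(lcm(1, …, n))`.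
Since `(n + 1) * choose n k = (k + 1) * choose (n + 1) (k + 1)`, summing over `k` gives
`(n + 1) * 2 ^ n ≤ (n + 1) * lcm(1, …, n + 1)`.
-/

open Finset

namespace Nat

theorem factorization_add_factorization_choose_le_log {p n k : ℕ} (hp : p.Prime)
    (hk : 0 < k) (hkn : k ≤ n) :
    k.factorization p + (n.choose k).factorization p ≤ log p n := by
  set v := k.factorization p
  have hv : p ^ v ∣ k := ordProj_dvd k p
  have hv_le : v ≤ log p n :=
    le_log_of_pow_le hp.one_lt ((le_of_dvd hk hv).trans hkn)
  have hcarries : {i ∈ Ico 1 (log p n + 1) | p ^ i ≤ k % p ^ i + (n - k) % p ^ i} ⊆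
      Ico (v + 1) (log p n + 1) := by
    intro i hi
    simp only [mem_filter, mem_Ico] at hi ⊢
    refine ⟨?_, hi.1.2⟩
    by_contra! hiv
    have hk_mod : k % p ^ i = 0 :=
      mod_eq_zero_of_dvd ((pow_dvd_pow p (by omega)).trans hv)
    have := mod_lt (n - k) (pow_pos hp.pos i)
    omega
  have := card_le_card hcarries
  rw [card_Ico, ← factorization_choose hp hkn (lt_add_one _)] at this
  omega

theorem mul_choose_dvd_lcmUpto {n k : ℕ} (hk : 0 < k) (hkn : k ≤ n) :
    k * n.choose k ∣ lcmUpto n := by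
  rw [← factorization_prime_le_iff_dvd (mul_ne_zero hk.ne' (choose_ne_zero hkn))
    (lcmUpto_ne_zero n)]
  intro p hp
  rw [factorization_mul hk.ne' (choose_ne_zero hkn), Finsupp.add_apply,
    factorization_lcmUpto n hp]
  exact factorization_add_factorization_choose_le_log hp hk hkn

theorem two_pow_le_lcmUpto_succ (n : ℕ) : 2 ^ n ≤ lcmUpto (n + 1) := by
  have hterm : ∀ k ∈ range (n + 1), (n + 1) * n.choose k ≤ lcmUpto (n + 1) := by
    intro k hk
    rw [add_one_mul_choose_eq, mul_comm]
    exact le_of_dvd (lcmUpto_pos _)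
      (mul_choose_dvd_lcmUpto k.succ_pos (by simpa using mem_range.mp hk))
  have hsum : (n + 1) * 2 ^ n ≤ (n + 1) * lcmUpto (n + 1) := calc
    (n + 1) * 2 ^ n = ∑ k ∈ range (n + 1), (n + 1) * n.choose k := by
      rw [← mul_sum, sum_range_choose]
    _ ≤ ∑ _k ∈ range (n + 1), lcmUpto (n + 1) := sum_le_sum hterm
    _ = (n + 1) * lcmUpto (n + 1) := by simp
  exact le_of_mul_le_mul_left hsum n.succ_pos

end Nat

theorem stmt_4_general (m : ℕ) :
    2 ^ (m - 1) ≤ (Finset.Icc 1 m).lcm id := by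
  cases m with
  | zero => simp
  | succ n => exact Nat.two_pow_le_lcmUpto_succ n

theorem stmt_4 (m : ℕ) (hm : 1 ≤ m) :
    2 ^ (m - 1) ≤ (Finset.Icc 1 m).lcm id :=
  stmt_4_general m
end

section
/- Let a right/return walking automaton be given (finite state type Q, non-blank symbol set S, transition δ : Q → Option S → Q × Bool, accepting set A ⊆ Q, initial state q₀), let k : ℕ, s : Fin k → S, and let N = lcm(1, …, Fintype.card Q). Let x, y : Fin (k+1) → ℕ be such that for every i, either x i = y i, or all of the following hold: x i > Fintype.card Q, y i > Fintype.card Q, and x i ≡ y i (mod N). Then the automaton accepts on the sparse guess τ_{x,s} if and only if it accepts on the sparse guess τ_{y,s}. (The paper's Claim 2: the result of the operation of the walking automaton B on the guess 0^{y₀}s₀0^{y₁}s₁…0^{y_{k−1}}s_{k−1}0^{y_k}00⋯ is the same as on the guess with parameters x, provided y_i ≡ x_i (mod N) whenever x_i > #Q and y_i = x_i otherwise.) -/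
/-- One step of a right/return walking automaton with transition `δ` on guess
tape `τ`: a configuration is a pair (state, position); move component `true`
means step right, `false` means return to cell `0`. -/
def wstep {Q S : Type*} (δ : Q → Option S → Q × Bool) (τ : ℕ → Option S) :
    Q × ℕ → Q × ℕ :=
  fun c =>
    let r := δ c.1 (τ c.2)
    (r.1, if r.2 then c.2 + 1 else 0)

/-- The automaton accepts on guess `τ` if the run started at `(q₀, 0)` reaches
a configuration whose state lies in `A`. -/
def wAccepts {Q S : Type*} (δ : Q → Option S → Q × Bool) (A : Set Q) (q₀ : Q)
    (τ : ℕ → Option S) : Prop :=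
  ∃ n : ℕ, ((wstep δ τ)^[n] (q₀, 0)).1 ∈ A

/-- The sparse guess `0^{x 0} s 0 0^{x 1} s 1 ⋯ s (k-1) 0^{x k} 0 0 ⋯`:
cell `p` holds `some (s j)` iff `p = (x 0 + ⋯ + x j) + j`, and `none` otherwise. -/
noncomputable def sparseGuess {S : Type*} (k : ℕ) (x : Fin (k + 1) → ℕ)
    (s : Fin k → S) (p : ℕ) : Option S :=
  if h : ∃ j : Fin k, p = (∑ i ∈ Finset.Iic (Fin.castSucc j), x i) + (j : ℕ)
  then some (s h.choose) else none

/-!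
While moving right over a blank block that it enters in state `w`, the automaton runs through
the orbit `w, f w, f² w, …` of the blank transition `f q = (δ q none).1`. This orbit is periodic
from some step on, with a period `p ≤ card Q` dividing `N`, and each of its states already occurs
among the first `card Q` iterates. So on a block of length `L ≥ card Q` the automaton either turns
back at a cell before `card Q`, independently of `L`, or crosses the block and leaves it in state
`f^L w`, which depends only on `L mod N`. Hence the runs on `u 0^L v` and `u 0^L' v` simulate
each other and visit the same states; replacing the blocks of `x` by those of `y` one at a time
proves the theorem.
-/

namespace Function

variable {α : Type*} [Fintype α] (f : α → α) (x : α)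

theorem exists_isPeriodicPt_iterate_add_le_card :
    ∃ a p, 0 < p ∧ a + p ≤ Fintype.card α ∧ IsPeriodicPt f p (f^[a] x) := by
  obtain ⟨i, j, hij, heq⟩ := Fintype.exists_ne_map_eq_of_card_lt
    (fun i : Fin (Fintype.card α + 1) => f^[i] x) (by simp)
  wlog hlt : i < j generalizing i j
  · exact this j i hij.symm heq.symm (hij.lt_or_gt.resolve_left hlt)
  refine ⟨i, j - i, by omega, by omega, ?_⟩
  rw [IsPeriodicPt, IsFixedPt, ← iterate_add_apply, Nat.sub_add_cancel hlt.le]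
  exact heq.symm

theorem exists_lt_card_iterate_eq (j : ℕ) :
    ∃ j' ≤ j, j' < Fintype.card α ∧ f^[j'] x = f^[j] x := by
  obtain ⟨a, p, hp, hap, hper⟩ := exists_isPeriodicPt_iterate_add_le_card f x
  by_cases hj : j < a
  · exact ⟨j, le_rfl, by omega, rfl⟩
  refine ⟨a + (j - a) % p, ?_, ?_, ?_⟩
  · have := Nat.mod_le (j - a) p
    omega
  · have := Nat.mod_lt (j - a) hp
    omega
  · rw [add_comm, iterate_add_apply, hper.iterate_mod_apply, ← iterate_add_apply,
      Nat.sub_add_cancel (not_lt.mp hj)]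

theorem iterate_eq_of_modEq_lcm {L L' : ℕ} (hL : Fintype.card α ≤ L)
    (hL' : Fintype.card α ≤ L') (hmod : L ≡ L' [MOD (Finset.Icc 1 (Fintype.card α)).lcm id]) :
    f^[L] x = f^[L'] x := by
  wlog hle : L ≤ L' generalizing L L'
  · exact (this hL' hL hmod.symm (le_of_not_ge hle)).symm
  obtain ⟨a, p, hp, hap, hper⟩ := exists_isPeriodicPt_iterate_add_le_card f x
  have hpN : p ∣ (Finset.Icc 1 (Fintype.card α)).lcm id :=
    Finset.dvd_lcm (s := Finset.Icc 1 _) (f := id) (Finset.mem_Icc.mpr ⟨hp, by omega⟩)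
  have hperL : IsPeriodicPt f (L' - L) (f^[L] x) := by
    have hdvd := hpN.trans ((Nat.modEq_iff_dvd' hle).mp hmod)
    rw [show f^[L] x = f^[L - a] (f^[a] x) by
      rw [← iterate_add_apply, Nat.sub_add_cancel (by omega)]]
    exact (hper.apply_iterate _).trans_dvd hdvd
  rw [← Nat.sub_add_cancel hle, iterate_add_apply]
  exact hperL.symm

end Function

theorem exists_iterate_eq_of_simulation {α β γ : Type*} (f : α → α) (g : β → β)
    (u : α → γ) (v : β → γ) (R : α → β → Prop)
    (hR : ∀ a b, R a b → ∃ n m, 0 < n ∧ R (f^[n] a) (g^[m] b) ∧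
      ∀ i < n, ∃ j, v (g^[j] b) = u (f^[i] a))
    (n : ℕ) : ∀ a b, R a b → ∃ m, v (g^[m] b) = u (f^[n] a) := by
  induction n using Nat.strong_induction_on with
  | _ n ih =>
    intro a b hab
    obtain ⟨n₀, m₀, hn₀, hR₀, hseg⟩ := hR a b hab
    by_cases hn : n < n₀
    · exact hseg n hn
    obtain ⟨m, hm⟩ := ih (n - n₀) (by omega) _ _ hR₀
    refine ⟨m + m₀, ?_⟩
    rw [Function.iterate_add_apply, hm, ← Function.iterate_add_apply,
      Nat.sub_add_cancel (not_lt.mp hn)]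

section WalkingAutomaton

variable {Q S : Type*} (δ : Q → Option S → Q × Bool)

theorem wstep_apply (τ : ℕ → Option S) (q : Q) (p : ℕ) :
    wstep δ τ (q, p) = ((δ q (τ p)).1, if (δ q (τ p)).2 then p + 1 else 0) := rfl

def blankTrans (q : Q) : Q := (δ q none).1

theorem iterate_wstep_of_blank {τ : ℕ → Option S} {b n : ℕ} {w : Q}
    (hblank : ∀ o < n, τ (b + o) = none)
    (hright : ∀ o < n, (δ ((blankTrans δ)^[o] w) none).2 = true) :
    (wstep δ τ)^[n] (w, b) = ((blankTrans δ)^[n] w, b + n) := by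
  induction n with
  | zero => rfl
  | succ n ih =>
    rw [Function.iterate_succ_apply', ih (fun o ho => hblank o (by omega))
      (fun o ho => hright o (by omega)), wstep_apply, hblank n n.lt_succ_self,
      hright n n.lt_succ_self, Function.iterate_succ_apply']
    rfl

theorem iterate_wstep_of_blank_of_turn {τ : ℕ → Option S} {b o : ℕ} {w : Q}
    (hblank : ∀ o' < o + 1, τ (b + o') = none)
    (hright : ∀ o' < o, (δ ((blankTrans δ)^[o'] w) none).2 = true)
    (hturn : (δ ((blankTrans δ)^[o] w) none).2 = false) :
    (wstep δ τ)^[o + 1] (w, b) = ((δ ((blankTrans δ)^[o] w) none).1, 0) := by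
  rw [Function.iterate_succ_apply', iterate_wstep_of_blank δ (fun o' ho' => hblank o' (by omega))
    hright, wstep_apply, hblank o o.lt_succ_self, hturn]
  rfl

/-- Configurations of the runs on `u 0^L v` and `u 0^L' v` (the blank blocks starting at
cell `b`) that are matched: same state, and the same cell of `u` or of `v`. -/
def PumpRel (b L L' : ℕ) (c c' : Q × ℕ) : Prop :=
  c.1 = c'.1 ∧ (c.2 = c'.2 ∧ c.2 ≤ b ∨ b + L ≤ c.2 ∧ c.2 + L' = c'.2 + L)

theorem pumpRel_wstep {τ σ : ℕ → Option S} {b L L' p p' : ℕ} (q : Q)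
    (hread : τ p = σ p') (hnext : PumpRel b L L' (q, p + 1) (q, p' + 1)) :
    PumpRel b L L' (wstep δ τ (q, p)) (wstep δ σ (q, p')) := by
  rw [wstep_apply, wstep_apply, hread]
  split
  · exact ⟨rfl, hnext.2⟩
  · exact ⟨rfl, .inl ⟨rfl, Nat.zero_le b⟩⟩

structure BlankBlockSwap (τ σ : ℕ → Option S) (b L L' : ℕ) : Prop where
  pre : ∀ p < b, τ p = σ p
  blank_left : ∀ o < L, τ (b + o) = none
  blank_right : ∀ o < L', σ (b + o) = none
  post : ∀ r, τ (b + L + r) = σ (b + L' + r)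

variable {τ σ : ℕ → Option S} {b L L' : ℕ}

theorem BlankBlockSwap.symm (h : BlankBlockSwap τ σ b L L') : BlankBlockSwap σ τ b L' L :=
  ⟨fun p hp => (h.pre p hp).symm, h.blank_right, h.blank_left, fun r => (h.post r).symm⟩

variable [Fintype Q]

theorem exists_pumpRel_of_blockStart (hL : Fintype.card Q ≤ L) (hL' : Fintype.card Q ≤ L')
    (hmod : L ≡ L' [MOD (Finset.Icc 1 (Fintype.card Q)).lcm id])
    (hτ : ∀ o < L, τ (b + o) = none) (hσ : ∀ o < L', σ (b + o) = none) (w : Q) :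
    ∃ n m, 0 < n ∧ PumpRel b L L' ((wstep δ τ)^[n] (w, b)) ((wstep δ σ)^[m] (w, b)) ∧
      ∀ i < n, ∃ j, ((wstep δ σ)^[j] (w, b)).1 = ((wstep δ τ)^[i] (w, b)).1 := by
  set f := blankTrans δ
  by_cases hret : ∃ o, (δ (f^[o] w) none).2 = false
  · classical
    set o := Nat.find hret
    -- the first returning state is new, so it is reached before step `card Q`
    have ho : o < Fintype.card Q := by
      obtain ⟨o', ho'o, ho'card, ho'eq⟩ := Function.exists_lt_card_iterate_eq f w o
      have : o ≤ o' := Nat.find_min' hret (by rw [ho'eq]; exact Nat.find_spec hret)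
      omega
    have hright : ∀ o' < o, (δ (f^[o'] w) none).2 = true := fun o' h => by
      simpa using Nat.find_min hret h
    refine ⟨o + 1, o + 1, o.succ_pos, ?_, fun i hi => ⟨i, ?_⟩⟩
    · rw [iterate_wstep_of_blank_of_turn δ (fun o' _ => hτ o' (by omega)) hright
          (Nat.find_spec hret),
        iterate_wstep_of_blank_of_turn δ (fun o' _ => hσ o' (by omega)) hright
          (Nat.find_spec hret)]
      exact ⟨rfl, .inl ⟨rfl, Nat.zero_le b⟩⟩
    · rw [iterate_wstep_of_blank δ (fun o' _ => hσ o' (by omega))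
          (fun o' _ => hright o' (by omega)),
        iterate_wstep_of_blank δ (fun o' _ => hτ o' (by omega))
          (fun o' _ => hright o' (by omega))]
  · have hright : ∀ o, (δ (f^[o] w) none).2 = true := fun o => by
      simpa using not_exists.mp hret o
    have hpos : 0 < L := (Fintype.card_pos_iff.mpr ⟨w⟩).trans_le hL
    refine ⟨L, L', hpos, ?_, fun i hi => ?_⟩
    · rw [iterate_wstep_of_blank δ hτ (fun o _ => hright o),
        iterate_wstep_of_blank δ hσ (fun o _ => hright o),
        Function.iterate_eq_of_modEq_lcm f w hL hL' hmod]
      exact ⟨rfl, .inr ⟨le_rfl, by ring⟩⟩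
    · obtain ⟨j, hji, hj, hjeq⟩ := Function.exists_lt_card_iterate_eq f w i
      refine ⟨j, ?_⟩
      rw [iterate_wstep_of_blank δ (fun o _ => hσ o (by omega)) (fun o _ => hright o),
        iterate_wstep_of_blank δ (fun o _ => hτ o (by omega)) (fun o _ => hright o)]
      exact hjeq

theorem pumpRel_simulation (hL : Fintype.card Q ≤ L) (hL' : Fintype.card Q ≤ L')
    (hmod : L ≡ L' [MOD (Finset.Icc 1 (Fintype.card Q)).lcm id])
    (hswap : BlankBlockSwap τ σ b L L') (q q' : Q) (p p' : ℕ)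
    (h : PumpRel b L L' (q, p) (q', p')) :
    ∃ n m, 0 < n ∧ PumpRel b L L' ((wstep δ τ)^[n] (q, p)) ((wstep δ σ)^[m] (q', p')) ∧
      ∀ i < n, ∃ j, ((wstep δ σ)^[j] (q', p')).1 = ((wstep δ τ)^[i] (q, p)).1 := by
  obtain ⟨rfl : q = q', hpos⟩ := h
  have hfirst : ∀ i < 1, ∃ j, ((wstep δ σ)^[j] (q, p')).1 = ((wstep δ τ)^[i] (q, p)).1 :=
    fun i hi => ⟨0, by rw [Nat.lt_one_iff.mp hi]; rfl⟩
  rcases hpos with ⟨rfl : p = p', hpb⟩ | ⟨hp, hp'⟩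
  · rcases hpb.lt_or_eq with hlt | rfl
    · exact ⟨1, 1, one_pos, pumpRel_wstep δ q (hswap.pre p hlt) ⟨rfl, .inl ⟨rfl, hlt⟩⟩,
        hfirst⟩
    · exact exists_pumpRel_of_blockStart δ hL hL' hmod hswap.blank_left hswap.blank_right q
  · obtain ⟨r, rfl⟩ := Nat.exists_eq_add_of_le hp
    obtain rfl : p' = b + L' + r := by omega
    exact ⟨1, 1, one_pos,
      pumpRel_wstep δ q (hswap.post r) ⟨rfl, .inr ⟨by omega, by omega⟩⟩, hfirst⟩

theorem wAccepts_of_blankBlockSwap (hL : Fintype.card Q ≤ L) (hL' : Fintype.card Q ≤ L')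
    (hmod : L ≡ L' [MOD (Finset.Icc 1 (Fintype.card Q)).lcm id])
    (hswap : BlankBlockSwap τ σ b L L') (A : Set Q) (q₀ : Q) (h : wAccepts δ A q₀ τ) :
    wAccepts δ A q₀ σ := by
  obtain ⟨n, hn⟩ := h
  obtain ⟨m, hm⟩ :=
    exists_iterate_eq_of_simulation (wstep δ τ) (wstep δ σ) Prod.fst Prod.fst
      (PumpRel b L L') (fun _ _ => pumpRel_simulation δ hL hL' hmod hswap _ _ _ _) n (q₀, 0)
      (q₀, 0) ⟨rfl, .inl ⟨rfl, Nat.zero_le b⟩⟩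
  exact ⟨m, hm ▸ hn⟩

theorem wAccepts_iff_of_blankBlockSwap (hL : Fintype.card Q ≤ L) (hL' : Fintype.card Q ≤ L')
    (hmod : L ≡ L' [MOD (Finset.Icc 1 (Fintype.card Q)).lcm id])
    (hswap : BlankBlockSwap τ σ b L L') (A : Set Q) (q₀ : Q) :
    wAccepts δ A q₀ τ ↔ wAccepts δ A q₀ σ :=
  ⟨wAccepts_of_blankBlockSwap δ hL hL' hmod hswap A q₀,
    wAccepts_of_blankBlockSwap δ hL' hL hmod.symm hswap.symm A q₀⟩

end WalkingAutomaton

section SparseGuess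

variable {S : Type*} {k : ℕ}

def sparsePos (x : Fin (k + 1) → ℕ) (j : Fin k) : ℕ :=
  (∑ i ∈ Finset.Iic j.castSucc, x i) + j

def blockStart (x : Fin (k + 1) → ℕ) (i : Fin (k + 1)) : ℕ :=
  (∑ j ∈ Finset.Iio i, x j) + i

theorem sparsePos_strictMono (x : Fin (k + 1) → ℕ) : StrictMono (sparsePos x) := by
  intro j₁ j₂ h
  have hsum : ∑ i ∈ Finset.Iic j₁.castSucc, x i ≤ ∑ i ∈ Finset.Iic j₂.castSucc, x i :=
    Finset.sum_le_sum_of_subset (Finset.Iic_subset_Iic.mpr (Fin.castSucc_le_castSucc_iff.mpr h.le))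
  have : (j₁ : ℕ) < j₂ := h
  unfold sparsePos
  omega

theorem sparseGuess_eq_dite (x : Fin (k + 1) → ℕ) (s : Fin k → S) (p : ℕ) :
    sparseGuess k x s p = if h : ∃ j, p = sparsePos x j then some (s h.choose) else none :=
  rfl

theorem sparseGuess_sparsePos (x : Fin (k + 1) → ℕ) (s : Fin k → S) (j : Fin k) :
    sparseGuess k x s (sparsePos x j) = some (s j) := by
  have hex : ∃ j', sparsePos x j = sparsePos x j' := ⟨j, rfl⟩
  rw [sparseGuess_eq_dite, dif_pos hex, (sparsePos_strictMono x).injective hex.choose_spec.symm]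

theorem sparseGuess_eq_none {x : Fin (k + 1) → ℕ} (s : Fin k → S) {p : ℕ}
    (hp : ∀ j, p ≠ sparsePos x j) : sparseGuess k x s p = none := by
  rw [sparseGuess_eq_dite, dif_neg fun ⟨j, hj⟩ => hp j hj]

theorem sparseGuess_congr {x y : Fin (k + 1) → ℕ} (s : Fin k → S) {p p' : ℕ}
    (h : ∀ j, p = sparsePos x j ↔ p' = sparsePos y j) :
    sparseGuess k x s p = sparseGuess k y s p' := by
  by_cases hp : ∃ j, p = sparsePos x j
  · obtain ⟨j, rfl⟩ := hp
    rw [(h j).mp rfl, sparseGuess_sparsePos, sparseGuess_sparsePos]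
  · push Not at hp
    rw [sparseGuess_eq_none s hp, sparseGuess_eq_none s fun j hj => hp j ((h j).mpr hj)]

theorem sparsePos_update (x : Fin (k + 1) → ℕ) (i : Fin (k + 1)) (v : ℕ) (j : Fin k) :
    sparsePos x j < blockStart x i ∧ sparsePos (Function.update x i v) j = sparsePos x j ∨
      blockStart x i + x i ≤ sparsePos x j ∧
        sparsePos (Function.update x i v) j + x i = sparsePos x j + v := by
  unfold sparsePos blockStart
  rcases lt_or_ge j.castSucc i with hji | hij
  · have hsum : ∑ e ∈ Finset.Iic j.castSucc, x e ≤ ∑ e ∈ Finset.Iio i, x e :=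
      Finset.sum_le_sum_of_subset fun e he =>
        Finset.mem_Iio.mpr ((Finset.mem_Iic.mp he).trans_lt hji)
    have hupd : ∑ e ∈ Finset.Iic j.castSucc, Function.update x i v e =
        ∑ e ∈ Finset.Iic j.castSucc, x e :=
      Finset.sum_congr rfl fun e he =>
        Function.update_of_ne ((Finset.mem_Iic.mp he).trans_lt hji).ne _ _
    have : (j : ℕ) < i := hji
    left
    omega
  · have hmem : i ∈ Finset.Iic j.castSucc := Finset.mem_Iic.mpr hij
    have hsum : x i + ∑ e ∈ Finset.Iio i, x e ≤ ∑ e ∈ Finset.Iic j.castSucc, x e := by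
      rw [← Finset.sum_insert Finset.notMem_Iio_self, Finset.Iio_insert]
      exact Finset.sum_le_sum_of_subset (Finset.Iic_subset_Iic.mpr hij)
    have hupd := Finset.sum_update_of_mem hmem x v
    have hsplit := Finset.sum_eq_add_sum_sdiff_singleton_of_mem hmem x
    have : (i : ℕ) ≤ j := hij
    right
    omega

theorem blankBlockSwap_sparseGuess_update (x : Fin (k + 1) → ℕ) (s : Fin k → S)
    (i : Fin (k + 1)) (v : ℕ) :
    BlankBlockSwap (sparseGuess k x s) (sparseGuess k (Function.update x i v) s)
      (blockStart x i) (x i) v where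
  pre p hp := sparseGuess_congr s fun j => by rcases sparsePos_update x i v j with h | h <;> omega
  blank_left o ho := sparseGuess_eq_none s fun j => by
    rcases sparsePos_update x i v j with h | h <;> omega
  blank_right o ho := sparseGuess_eq_none s fun j => by
    rcases sparsePos_update x i v j with h | h <;> omega
  post r := sparseGuess_congr s fun j => by rcases sparsePos_update x i v j with h | h <;> omega

end SparseGuess

theorem iff_of_forall_update {ι α : Type*} [Fintype ι] [DecidableEq ι]
    (F : (ι → α) → Prop) (r : α → α → Prop)
    (hF : ∀ x i a, r (x i) a → (F x ↔ F (Function.update x i a)))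
    (x y : ι → α) (hxy : ∀ i, r (x i) (y i)) : F x ↔ F y := by
  suffices ∀ t : Finset ι, F x ↔ F (t.piecewise y x) by simpa using this Finset.univ
  intro t
  induction t using Finset.induction_on with
  | empty => simp
  | insert i t hi ih =>
    rw [Finset.piecewise_insert, ← hF]
    · exact ih
    · rw [Finset.piecewise_eq_of_notMem t y x hi]
      exact hxy i

theorem stmt_10 {Q S : Type*} [Fintype Q] (δ : Q → Option S → Q × Bool)
    (A : Set Q) (q₀ : Q) (k : ℕ) (s : Fin k → S)
    (N : ℕ) (hN : N = (Finset.Icc 1 (Fintype.card Q)).lcm id)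
    (x y : Fin (k + 1) → ℕ)
    (hxy : ∀ i : Fin (k + 1), x i = y i ∨
      (Fintype.card Q < x i ∧ Fintype.card Q < y i ∧ x i ≡ y i [MOD N])) :
    wAccepts δ A q₀ (sparseGuess k x s) ↔ wAccepts δ A q₀ (sparseGuess k y s) := by
  subst hN
  refine iff_of_forall_update (fun z => wAccepts δ A q₀ (sparseGuess k z s))
    (fun a b => a = b ∨ (Fintype.card Q < a ∧ Fintype.card Q < b ∧
      a ≡ b [MOD (Finset.Icc 1 (Fintype.card Q)).lcm id])) ?_ x y hxy
  rintro z i v (rfl | ⟨hz, hv, hmod⟩)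
  · rw [Function.update_eq_self]
  · exact wAccepts_iff_of_blankBlockSwap δ hz.le hv.le hmod
      (blankBlockSwap_sparseGuess_update z s i v) A q₀
end
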